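/- arXiv:1112.6401 — 2 statements merged into one kernel-verified Lean document; each statement's English description precedes it below -/
import Mathlib

section
/- For every α ∈ [0,1] and all integers k, p, one has (|p|^{2α} + |k|^{2α} - |k-p|^{2α})² ≤ 4 |k|^{2α} |p|^{2α}. -/
open Real

lemma aux_subadd {u v α : ℝ} (hu : 0 ≤ u) (hv : 0 ≤ v) (h0 : 0 ≤ α) (h1 : α ≤ 1) :
    (u + v) ^ α ≤ u ^ α + v ^ α := by
  lift u to NNReal using hu
  lift v to NNReal using hv
  have := NNReal.rpow_add_le_add_rpow u v h0 h1
  exact_mod_cast this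

theorem stmt_0 (α : ℝ) (hα : α ∈ Set.Icc (0:ℝ) 1) (k p : ℤ) :
    ((|(p:ℝ)|) ^ (2*α) + (|(k:ℝ)|) ^ (2*α) - (|(k:ℝ) - (p:ℝ)|) ^ (2*α)) ^ 2
      ≤ 4 * (|(k:ℝ)|) ^ (2*α) * (|(p:ℝ)|) ^ (2*α) := by
  obtain ⟨h0, h1⟩ := hα
  set x := |(k:ℝ)| with hx
  set y := |(p:ℝ)| with hy
  set z := |(k:ℝ) - (p:ℝ)| with hz
  have hxn : 0 ≤ x := abs_nonneg _
  have hyn : 0 ≤ y := abs_nonneg _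
  have hzn : 0 ≤ z := abs_nonneg _
  have hsq : ∀ t : ℝ, 0 ≤ t → t ^ (2*α) = (t ^ α) ^ 2 := by
    intro t ht
    rw [mul_comm, Real.rpow_mul ht, Real.rpow_two]
  rw [hsq x hxn, hsq y hyn, hsq z hzn]
  set A := x ^ α
  set B := y ^ α
  set C := z ^ α
  have hAn : 0 ≤ A := Real.rpow_nonneg hxn α
  have hBn : 0 ≤ B := Real.rpow_nonneg hyn α
  have hCn : 0 ≤ C := Real.rpow_nonneg hzn α
  -- triangle-type inequalities on x,y,z
  have t1 : z ≤ x + y := by rw [hx, hy, hz]; exact abs_sub _ _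
  have t2 : x ≤ z + y := by
    rw [hx, hy, hz]
    calc |(k:ℝ)| = |((k:ℝ) - p) + p| := by ring_nf
    _ ≤ |(k:ℝ) - p| + |(p:ℝ)| := abs_add_le _ _
  have t3 : y ≤ z + x := by
    rw [hx, hy, hz]
    calc |(p:ℝ)| = |-(((k:ℝ) - p)) + k| := by ring_nf
    _ ≤ |-((k:ℝ) - p)| + |(k:ℝ)| := abs_add_le _ _
    _ = |(k:ℝ) - p| + |(k:ℝ)| := by rw [abs_neg]
  have mono : ∀ u v : ℝ, 0 ≤ u → u ≤ v → u ^ α ≤ v ^ α := fun u v hu huv =>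
    Real.rpow_le_rpow hu huv h0
  have hC : C ≤ A + B :=
    le_trans (mono z (x + y) hzn t1) (aux_subadd hxn hyn h0 h1)
  have hA : A ≤ C + B :=
    le_trans (mono x (z + y) hxn t2) (aux_subadd hzn hyn h0 h1)
  have hB : B ≤ C + A :=
    le_trans (mono y (z + x) hyn t3) (aux_subadd hzn hxn h0 h1)
  have k1 : 0 ≤ A + B - C := by linarith
  have k2 : 0 ≤ C + B - A := by linarith
  have k3 : 0 ≤ C + A - B := by linarith
  have k4 : 0 ≤ A + B + C := by linarith
  nlinarith [mul_nonneg (mul_nonneg (mul_nonneg k1 k2) k3) k4]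
end

section
/- For every α ∈ [0,1] and every real t ≥ 0, one has 2·sinh(α t) ≤ (2·sinh t)^α. -/
open Real

lemma aux_rpow_add {a b p : ℝ} (ha : 0 ≤ a) (hb : 0 ≤ b) (hp : 0 ≤ p) (hp1 : p ≤ 1) :
    (a + b) ^ p ≤ a ^ p + b ^ p := by
  lift a to NNReal using ha
  lift b to NNReal using hb
  exact_mod_cast NNReal.rpow_add_le_add_rpow a b hp hp1

theorem stmt_1 (α : ℝ) (hα : α ∈ Set.Icc (0:ℝ) 1) (t : ℝ) (ht : 0 ≤ t) :
    2 * Real.sinh (α * t) ≤ (2 * Real.sinh t) ^ α := by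
  obtain ⟨h0, h1⟩ := hα
  have hsinh : 2 * Real.sinh t = Real.exp t - Real.exp (-t) := by
    rw [Real.sinh_eq]; ring
  have hsinh' : 2 * Real.sinh (α * t) = Real.exp (α * t) - Real.exp (-(α * t)) := by
    rw [Real.sinh_eq]; ring
  set a := Real.exp t - Real.exp (-t) with ha_def
  have ha : 0 ≤ a := by
    have : Real.exp (-t) ≤ Real.exp t := Real.exp_le_exp.2 (by linarith)
    linarith
  have hb : 0 ≤ Real.exp (-t) := (Real.exp_pos _).le
  have key : (a + Real.exp (-t)) ^ α ≤ a ^ α + Real.exp (-t) ^ α :=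
    aux_rpow_add ha hb h0 h1
  have hab : a + Real.exp (-t) = Real.exp t := by ring
  rw [hab] at key
  have h1' : Real.exp t ^ α = Real.exp (α * t) := by
    rw [← Real.exp_mul]; ring_nf
  have h2' : Real.exp (-t) ^ α = Real.exp (-(α * t)) := by
    rw [← Real.exp_mul]; ring_nf
  rw [h1', h2'] at key
  rw [hsinh', hsinh]
  linarith
end
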